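/- arXiv:2508.06935 — 4 statements merged into one kernel-verified Lean document; each statement's English description precedes it below -/
import Mathlib

section
/- Let ω be the j-neighbour Bootstrap Percolation with noise set N ⊆ V×ℕ≥1 started from the all-ones configuration. If ω_o(T) = 0 for some (o,T) ∈ V×ℕ with T ≥ 1, then there exists a history graph ℋ = (𝒰, ℱ, 𝒰*) for (o,T) for the j-neighbour Bootstrap Percolation that is present in ω, i.e. ω_x(t) = 0 for every (x,t) ∈ 𝒰, and (x,t) ∈ N if and only if (x,t) ∈ 𝒰*. -/
open Classical
noncomputable section

namespace Paper

variable {V : Type*}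

/-- Number of neighbours of `x` whose value is `1` (`true`). -/
def cCount (G : SimpleGraph V) [DecidableRel G.Adj] [∀ v, Fintype (G.neighborSet v)]
    (η : V → Bool) (x : V) : ℕ :=
  ((G.neighborFinset x).filter fun y => η y = true).card

/-- The `j`-neighbour Bootstrap Percolation with noise set `N` and initial configuration `ξ`. -/
noncomputable def bootstrapPerc (G : SimpleGraph V) [DecidableRel G.Adj]
    [∀ v, Fintype (G.neighborSet v)] (j : ℕ) (N : Set (V × ℕ)) (ξ : V → Bool) :
    ℕ → V → Bool
  | 0 => ξ
  | t + 1 => fun x =>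
      if (x, t + 1) ∈ N then false
      else bootstrapPerc G j N ξ t x || decide (j ≤ cCount G (bootstrapPerc G j N ξ t) x)

/-- The `j`-threshold Consensus Process with noise set `N` and initial configuration `ξ`. -/
noncomputable def consensus (G : SimpleGraph V) [DecidableRel G.Adj]
    [∀ v, Fintype (G.neighborSet v)] (j : ℕ) (N : Set (V × ℕ)) (ξ : V → Bool) :
    ℕ → V → Bool
  | 0 => ξ
  | t + 1 => fun x =>
      if (x, t + 1) ∈ N then false
      else decide (j ≤ cCount G (consensus G j N ξ t) x)

/-- `∂_E K`: number of edges with exactly one endpoint in `K`. -/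
def edgeBoundaryCard (G : SimpleGraph V) [DecidableRel G.Adj]
    [∀ v, Fintype (G.neighborSet v)] (K : Finset V) : ℕ :=
  ∑ x ∈ K, ((G.neighborFinset x).filter fun y => y ∉ K).card

/-- The edge expansion constant `Φ_E(G)`. -/
noncomputable def edgeExpansion (G : SimpleGraph V) [DecidableRel G.Adj]
    [∀ v, Fintype (G.neighborSet v)] : ℝ :=
  sInf {r : ℝ | ∃ K : Finset V, K.Nonempty ∧ r = (edgeBoundaryCard G K : ℝ) / (K.card : ℝ)}

/-- `∂_V K`: number of vertices outside `K` adjacent to a vertex of `K`. -/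
def vertexBoundaryCard [DecidableEq V] (G : SimpleGraph V) [DecidableRel G.Adj]
    [∀ v, Fintype (G.neighborSet v)] (K : Finset V) : ℕ :=
  ((K.biUnion fun x => G.neighborFinset x) \ K).card

/-- The vertex expansion constant `Φ_V(G)`. -/
noncomputable def vertexExpansion [DecidableEq V] (G : SimpleGraph V) [DecidableRel G.Adj]
    [∀ v, Fintype (G.neighborSet v)] : ℝ :=
  sInf {r : ℝ | ∃ K : Finset V, K.Nonempty ∧ r = (vertexBoundaryCard G K : ℝ) / (K.card : ℝ)}

/-- A history graph `(𝒰, ℱ, 𝒰*)` for `(o, T)`.  If `bp = true` it is a history graph for the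
`j`-neighbour Bootstrap Percolation (one outgoing straight edge and `deg x − j + 1` outgoing
oblique edges at every vertex of `𝒰 \ 𝒰*`); if `bp = false` it is a history graph for the
`j`-threshold Consensus Process (no straight edges and `deg x − j + 1` outgoing oblique edges). -/
structure HistoryGraph (G : SimpleGraph V) [DecidableRel G.Adj]
    [∀ v, Fintype (G.neighborSet v)] (j : ℕ) (o : V) (T : ℕ) (bp : Bool) where
  U : Finset (V × ℕ)
  F : Finset ((V × ℕ) × (V × ℕ))
  Ustar : Finset (V × ℕ)
  ustar_subset : Ustar ⊆ U
  edge_mem_fst : ∀ e ∈ F, e.1 ∈ U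
  edge_mem_snd : ∀ e ∈ F, e.2 ∈ U
  edge_time : ∀ e ∈ F, e.1.2 = e.2.2 + 1
  edge_space : ∀ e ∈ F, e.1.1 = e.2.1 ∨ G.Adj e.1.1 e.2.1
  conn : ∀ u ∈ U, ∀ v ∈ U,
    Relation.ReflTransGen (fun a b => (a, b) ∈ F ∨ (b, a) ∈ F) u v
  root_mem : (o, T) ∈ U
  time_range : ∀ u ∈ U, u ≠ (o, T) → 1 ≤ u.2 ∧ u.2 ≤ T
  time_one_star : ∀ u ∈ U, u.2 = 1 → u ∈ Ustar
  star_no_out : ∀ u ∈ Ustar, ∀ e ∈ F, e.1 ≠ u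
  straight_count : ∀ u ∈ U, u ∉ Ustar →
      (F.filter fun e => e.1 = u ∧ e.2.1 = u.1).card = cond bp 1 0
  oblique_count : ∀ u ∈ U, u ∉ Ustar →
      (F.filter fun e => e.1 = u ∧ e.2.1 ≠ u.1).card = G.degree u.1 + 1 - j

/-- The strong product `G ⊠ ℕ`. -/
def strongProd (G : SimpleGraph V) : SimpleGraph (V × ℕ) where
  Adj p q := p ≠ q ∧ (p.2 ≤ q.2 + 1 ∧ q.2 ≤ p.2 + 1) ∧ (p.1 = q.1 ∨ G.Adj p.1 q.1)
  symm := ⟨by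
    rintro p q ⟨h1, ⟨h2, h3⟩, h4⟩
    exact ⟨h1.symm, ⟨h3, h2⟩, h4.elim (fun e => Or.inl e.symm) fun a => Or.inr a.symm⟩⟩
  loopless := ⟨fun p h => h.1 rfl⟩

/-- The connected component of `p` in the subgraph of `G ⊠ ℕ` induced by `Z`. -/
def cluster (G : SimpleGraph V) (Z : Set (V × ℕ)) (p : V × ℕ) : Set (V × ℕ) :=
  {q | p ∈ Z ∧ q ∈ Z ∧
    Relation.ReflTransGen (fun a b => a ∈ Z ∧ b ∈ Z ∧ (strongProd G).Adj a b) p q}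

/-- The witness-root property defining `j ≤ j̄`. -/
def radialGood (G : SimpleGraph V) [DecidableRel G.Adj] [∀ v, Fintype (G.neighborSet v)]
    (j : ℕ) : Prop :=
  ∃ r : V, ∀ x : V,
    j ≤ ((G.neighborFinset x).filter fun y => G.dist r y = G.dist r x + 1).card

end Paper

/-!
A zero of `ω` at a site `(x, t + 1)` outside the noise set was already a zero at `(x, t)`, and at
time `t` fewer than `j` neighbours of `x` were ones, so at least `deg x - j + 1` of them were
zeros. Taking `(x, t)` together with `deg x - j + 1` such zero neighbours as the children of
`(x, t + 1)`, and noise sites as leaves, the descendants of `(o, T)` form a history graph all of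
whose sites are zeros. Since `ω(0) ≡ 1`, a zero at time `1` must be noise, so the descent stops by
time `1` and exactly at the noise sites.
-/

namespace Paper

open Finset

section Descendants

variable {α : Type*} [DecidableEq α] (c : α → Finset α)

def descendants : ℕ → α → Finset α
  | 0, a => {a}
  | n + 1, a => insert a ((c a).biUnion (descendants n))

def descendantEdges (n : ℕ) (a : α) : Finset (α × α) :=
  (descendants c n a).biUnion fun u => (c u).image (Prod.mk u)

variable {c}

theorem self_mem_descendants (n : ℕ) (a : α) : a ∈ descendants c n a := by
  cases n <;> simp [descendants]

theorem mem_descendants_succ {n : ℕ} {a u : α} :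
    u ∈ descendants c (n + 1) a ↔ u = a ∨ ∃ b ∈ c a, u ∈ descendants c n b := by
  simp [descendants]

theorem descendants_subset_succ {n : ℕ} {a b : α} (hb : b ∈ c a) :
    descendants c n b ⊆ descendants c (n + 1) a :=
  fun _ hu => mem_descendants_succ.2 (Or.inr ⟨b, hb, hu⟩)

omit [DecidableEq α] in
theorem rank_le_of_reflTransGen {rank : α → ℕ} (hrank : ∀ u, ∀ b ∈ c u, rank b < rank u)
    {a u : α} (h : Relation.ReflTransGen (fun x y => y ∈ c x) a u) : rank u ≤ rank a := by
  induction h with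
  | refl => rfl
  | tail _ hb ih => exact (hrank _ _ hb).le.trans ih

theorem mem_descendants_iff {rank : α → ℕ} (hrank : ∀ u, ∀ b ∈ c u, rank b < rank u)
    {n : ℕ} {a u : α} (hn : rank a < n) :
    u ∈ descendants c n a ↔ Relation.ReflTransGen (fun x y => y ∈ c x) a u := by
  induction n generalizing a with
  | zero => omega
  | succ n ih =>
    rw [mem_descendants_succ]
    constructor
    · rintro (rfl | ⟨b, hb, hu⟩)
      · exact .refl
      · exact .head hb ((ih (by have := hrank a b hb; omega)).1 hu)
    · intro h
      rcases h.cases_head with rfl | ⟨b, hb, hbu⟩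
      · exact Or.inl rfl
      · exact Or.inr ⟨b, hb, (ih (by have := hrank a b hb; omega)).2 hbu⟩

theorem mem_descendantEdges {n : ℕ} {a : α} {e : α × α} :
    e ∈ descendantEdges c n a ↔ e.1 ∈ descendants c n a ∧ e.2 ∈ c e.1 := by
  obtain ⟨u, v⟩ := e
  simp [descendantEdges]

theorem reflTransGen_descendantEdges {n : ℕ} {a u : α} (hu : u ∈ descendants c n a) :
    Relation.ReflTransGen (fun x y => (x, y) ∈ descendantEdges c n a) a u := by
  induction n generalizing a with
  | zero =>
    rw [descendants, mem_singleton] at hu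
    exact hu ▸ .refl
  | succ n ih =>
    rcases mem_descendants_succ.1 hu with rfl | ⟨b, hb, hu⟩
    · exact .refl
    · refine .head (mem_descendantEdges.2 ⟨self_mem_descendants _ _, hb⟩)
        (Relation.ReflTransGen.mono (fun _ _ hxy => ?_) _ _ (ih hu))
      exact biUnion_subset_biUnion_of_subset_left _ (descendants_subset_succ hb) hxy

theorem card_filter_descendantEdges {n : ℕ} {a u : α} (hu : u ∈ descendants c n a)
    (P : α → Prop) [DecidablePred P] :
    ((descendantEdges c n a).filter fun e => e.1 = u ∧ P e.2).card = ((c u).filter P).card := by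
  suffices h : (descendantEdges c n a).filter (fun e => e.1 = u ∧ P e.2) =
      ((c u).filter P).image (Prod.mk u) by
    rw [h, card_image_of_injective _ (Prod.mk_right_injective u)]
  ext ⟨x, y⟩
  simp only [mem_filter, mem_descendantEdges, mem_image, Prod.mk.injEq]
  constructor
  · rintro ⟨⟨-, hy⟩, rfl, hP⟩
    exact ⟨y, ⟨hy, hP⟩, rfl, rfl⟩
  · rintro ⟨y, ⟨hy, hP⟩, rfl, rfl⟩
    exact ⟨⟨hu, hy⟩, rfl, hP⟩

end Descendants

variable {V : Type*} (G : SimpleGraph V) [∀ v, Fintype (G.neighborSet v)]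

def zeroNeighborFinset (η : V → Bool) (x : V) : Finset V :=
  (G.neighborFinset x).filter fun y => η y = false

def chooseZeroNeighbors (η : V → Bool) (k : ℕ) (x : V) : Finset V :=
  (exists_subset_card_eq (min_le_right k (zeroNeighborFinset G η x).card)).choose

variable {G}

theorem adj_of_mem_chooseZeroNeighbors {η : V → Bool} {k : ℕ} {x y : V}
    (hy : y ∈ chooseZeroNeighbors G η k x) : G.Adj x y ∧ η y = false := by
  have := (exists_subset_card_eq (min_le_right k (zeroNeighborFinset G η x).card)).choose_spec.1 hy
  simpa [zeroNeighborFinset] using this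

theorem card_chooseZeroNeighbors {η : V → Bool} {k : ℕ} {x : V}
    (hk : k ≤ (zeroNeighborFinset G η x).card) : (chooseZeroNeighbors G η k x).card = k :=
  (exists_subset_card_eq (min_le_right k _)).choose_spec.2.trans (min_eq_left hk)

variable (G) (j : ℕ) (N : Set (V × ℕ))

def historyChildren (ω : ℕ → V → Bool) : V × ℕ → Finset (V × ℕ)
  | (_, 0) => ∅
  | (x, t + 1) =>
    if (x, t + 1) ∈ N then ∅
    else insert (x, t) ((chooseZeroNeighbors G (ω t) (G.degree x + 1 - j) x).image (·, t))

variable {G j N} {ω : ℕ → V → Bool}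

theorem historyChildren_of_mem {u : V × ℕ} (hu : u ∈ N) : historyChildren G j N ω u = ∅ := by
  rcases u with ⟨x, _ | t⟩ <;> simp [historyChildren, hu]

theorem historyChildren_succ {x : V} {t : ℕ} (hN : (x, t + 1) ∉ N) :
    historyChildren G j N ω (x, t + 1) =
      insert (x, t) ((chooseZeroNeighbors G (ω t) (G.degree x + 1 - j) x).image (·, t)) :=
  if_neg hN

theorem mem_historyChildren {u b : V × ℕ} (hb : b ∈ historyChildren G j N ω u) :
    b.2 + 1 = u.2 ∧ (b.1 = u.1 ∨ G.Adj u.1 b.1) := by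
  rcases u with ⟨x, _ | t⟩
  · simp [historyChildren] at hb
  by_cases hN : (x, t + 1) ∈ N
  · simp [historyChildren_of_mem hN] at hb
  rw [historyChildren_succ hN, mem_insert, mem_image] at hb
  rcases hb with rfl | ⟨y, hy, rfl⟩
  · exact ⟨rfl, Or.inl rfl⟩
  · exact ⟨rfl, Or.inr (adj_of_mem_chooseZeroNeighbors hy).1⟩

theorem card_filter_fst_eq_historyChildren {x : V} {t : ℕ} (hN : (x, t + 1) ∉ N) :
    ((historyChildren G j N ω (x, t + 1)).filter fun b => b.1 = x).card = 1 := by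
  rw [card_eq_one]
  refine ⟨(x, t), ?_⟩
  ext b
  simp only [historyChildren_succ hN, mem_filter, mem_insert, mem_image, mem_singleton]
  constructor
  · rintro ⟨rfl | ⟨y, hy, rfl⟩, hyx⟩
    · rfl
    · exact absurd hyx (adj_of_mem_chooseZeroNeighbors hy).1.ne'
  · rintro rfl
    exact ⟨Or.inl rfl, rfl⟩

theorem card_filter_fst_ne_historyChildren {x : V} {t : ℕ} (hN : (x, t + 1) ∉ N)
    (hk : G.degree x + 1 - j ≤ (zeroNeighborFinset G (ω t) x).card) :
    ((historyChildren G j N ω (x, t + 1)).filter fun b => b.1 ≠ x).card = G.degree x + 1 - j := by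
  have hfilter : (historyChildren G j N ω (x, t + 1)).filter (fun b => b.1 ≠ x) =
      (chooseZeroNeighbors G (ω t) (G.degree x + 1 - j) x).image (·, t) := by
    rw [historyChildren_succ hN, filter_insert, if_neg (by simp), filter_true_of_mem]
    simp only [mem_image]
    rintro _ ⟨y, hy, rfl⟩
    exact (adj_of_mem_chooseZeroNeighbors hy).1.ne'
  rw [hfilter, card_image_of_injective _ (Prod.mk_left_injective t), card_chooseZeroNeighbors hk]

variable [DecidableRel G.Adj]

theorem cCount_add_card_zeroNeighborFinset (η : V → Bool) (x : V) :
    cCount G η x + (zeroNeighborFinset G η x).card = G.degree x := by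
  simp only [cCount, zeroNeighborFinset, ← Bool.not_eq_true]
  exact card_filter_add_card_filter_not _

variable (j N) {ξ : V → Bool}

theorem bootstrapPerc_succ_eq_false {t : ℕ} {x : V} :
    bootstrapPerc G j N ξ (t + 1) x = false ↔
      (x, t + 1) ∈ N ∨
        bootstrapPerc G j N ξ t x = false ∧ cCount G (bootstrapPerc G j N ξ t) x < j := by
  by_cases hN : (x, t + 1) ∈ N <;> simp [bootstrapPerc, hN]

theorem one_le_of_bootstrapPerc_eq_false {t : ℕ} {x : V}
    (h : bootstrapPerc G j N (fun _ => true) t x = false) : 1 ≤ t := by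
  rcases t with _ | t
  · simp [bootstrapPerc] at h
  · omega

theorem mem_of_bootstrapPerc_one_eq_false {x : V}
    (h : bootstrapPerc G j N (fun _ => true) 1 x = false) : (x, 1) ∈ N := by
  simpa [bootstrapPerc] using (bootstrapPerc_succ_eq_false j N).1 h

variable {j N}

theorem eq_false_of_mem_historyChildren {u b : V × ℕ}
    (hu : bootstrapPerc G j N ξ u.2 u.1 = false)
    (hb : b ∈ historyChildren G j N (bootstrapPerc G j N ξ) u) :
    bootstrapPerc G j N ξ b.2 b.1 = false := by
  rcases u with ⟨x, _ | t⟩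
  · simp [historyChildren] at hb
  by_cases hN : (x, t + 1) ∈ N
  · simp [historyChildren_of_mem hN] at hb
  rw [historyChildren_succ hN, mem_insert, mem_image] at hb
  rcases hb with rfl | ⟨y, hy, rfl⟩
  · exact (((bootstrapPerc_succ_eq_false j N).1 hu).resolve_left hN).1
  · exact (adj_of_mem_chooseZeroNeighbors hy).2

theorem card_filter_fst_ne_historyChildren_bootstrapPerc {x : V} {t : ℕ}
    (hx : bootstrapPerc G j N ξ (t + 1) x = false) (hN : (x, t + 1) ∉ N) :
    ((historyChildren G j N (bootstrapPerc G j N ξ) (x, t + 1)).filter fun b => b.1 ≠ x).card =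
      G.degree x + 1 - j := by
  refine card_filter_fst_ne_historyChildren hN ?_
  have hlt := (((bootstrapPerc_succ_eq_false j N).1 hx).resolve_left hN).2
  have := cCount_add_card_zeroNeighborFinset (G := G) (bootstrapPerc G j N ξ t) x
  omega

theorem HistoryGraph.exists_of_children (c : V × ℕ → Finset (V × ℕ)) (S : Set (V × ℕ))
    (o : V) (T : ℕ) (hstep : ∀ u, ∀ b ∈ c u, b.2 + 1 = u.2 ∧ (b.1 = u.1 ∨ G.Adj u.1 b.1))
    (hS : ∀ u ∈ S, c u = ∅)
    (hpos : ∀ u, Relation.ReflTransGen (fun x y => y ∈ c x) (o, T) u → 1 ≤ u.2)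
    (hone : ∀ u, Relation.ReflTransGen (fun x y => y ∈ c x) (o, T) u → u.2 = 1 → u ∈ S)
    (hstraight : ∀ u, Relation.ReflTransGen (fun x y => y ∈ c x) (o, T) u → u ∉ S →
      ((c u).filter fun v => v.1 = u.1).card = 1)
    (hoblique : ∀ u, Relation.ReflTransGen (fun x y => y ∈ c x) (o, T) u → u ∉ S →
      ((c u).filter fun v => v.1 ≠ u.1).card = G.degree u.1 + 1 - j) :
    ∃ H : HistoryGraph G j o T true,
      (∀ u ∈ H.U, Relation.ReflTransGen (fun x y => y ∈ c x) (o, T) u) ∧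
      ∀ u ∈ H.U, (u ∈ S ↔ u ∈ H.Ustar) := by
  have hrank : ∀ u, ∀ b ∈ c u, b.2 < u.2 := fun u b hb => by have := (hstep u b hb).1; omega
  have hmem : ∀ {u}, u ∈ descendants c (T + 1) (o, T) ↔
      Relation.ReflTransGen (fun x y => y ∈ c x) (o, T) u :=
    mem_descendants_iff hrank (Nat.lt_succ_self T)
  let E := descendantEdges c (T + 1) (o, T)
  have hE : ∀ {e}, e ∈ E → e.1 ∈ descendants c (T + 1) (o, T) ∧ e.2 ∈ c e.1 :=
    mem_descendantEdges.1
  have hpath : ∀ {u}, u ∈ descendants c (T + 1) (o, T) →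
      Relation.ReflTransGen (fun a b => (a, b) ∈ E ∨ (b, a) ∈ E) (o, T) u :=
    fun hu => Relation.ReflTransGen.mono (fun _ _ => Or.inl) _ _ (reflTransGen_descendantEdges hu)
  have : Std.Symm fun a b => (a, b) ∈ E ∨ (b, a) ∈ E := ⟨fun _ _ => Or.symm⟩
  refine ⟨{
    U := descendants c (T + 1) (o, T)
    F := E
    Ustar := (descendants c (T + 1) (o, T)).filter (· ∈ S)
    ustar_subset := filter_subset _ _
    edge_mem_fst := fun _ he => (hE he).1
    edge_mem_snd := fun _ he => hmem.2 ((hmem.1 (hE he).1).tail (hE he).2)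
    edge_time := fun _ he => ((hstep _ _ (hE he).2).1).symm
    edge_space := fun _ he => ((hstep _ _ (hE he).2).2).imp Eq.symm id
    conn := fun _ hu _ hv => (Std.Symm.symm _ _ (hpath hu)).trans (hpath hv)
    root_mem := self_mem_descendants _ _
    time_range := fun _ hu _ => ⟨hpos _ (hmem.1 hu), rank_le_of_reflTransGen hrank (hmem.1 hu)⟩
    time_one_star := fun _ hu h1 => mem_filter.2 ⟨hu, hone _ (hmem.1 hu) h1⟩
    star_no_out := fun u hu e he heu => by
      have := (hE he).2
      rw [heu, hS u (mem_filter.1 hu).2] at this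
      exact notMem_empty _ this
    straight_count := fun u hu hu' => (card_filter_descendantEdges hu _).trans
      (hstraight u (hmem.1 hu) fun h => hu' (mem_filter.2 ⟨hu, h⟩))
    oblique_count := fun u hu hu' => (card_filter_descendantEdges hu _).trans
      (hoblique u (hmem.1 hu) fun h => hu' (mem_filter.2 ⟨hu, h⟩)) },
    fun _ hu => hmem.1 hu, fun _ hu => ?_⟩
  exact ⟨fun h => mem_filter.2 ⟨hu, h⟩, fun h => (mem_filter.1 h).2⟩

end Paper

open Paper in
theorem bootstrap_has_present_history_graph_general
    {V : Type*}
    (G : SimpleGraph V) [DecidableRel G.Adj] [∀ v, Fintype (G.neighborSet v)]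
    (j : ℕ)
    (N : Set (V × ℕ))
    (o : V) (T : ℕ)
    (h0 : bootstrapPerc G j N (fun _ => true) T o = false) :
    ∃ H : HistoryGraph G j o T true,
      (∀ u ∈ H.U, bootstrapPerc G j N (fun _ => true) u.2 u.1 = false) ∧
      (∀ u ∈ H.U, (u ∈ N ↔ u ∈ H.Ustar)) := by
  set ω := bootstrapPerc G j N (fun _ => true)
  have hzero : ∀ u, Relation.ReflTransGen (fun x y => y ∈ historyChildren G j N ω x) (o, T) u →
      ω u.2 u.1 = false := fun u hu => by
    induction hu with
    | refl => exact h0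
    | tail _ hb ih => exact eq_false_of_mem_historyChildren ih hb
  have hsucc : ∀ u, Relation.ReflTransGen (fun x y => y ∈ historyChildren G j N ω x) (o, T) u →
      ∃ t, u.2 = t + 1 :=
    fun u hu => Nat.exists_eq_add_of_le' (one_le_of_bootstrapPerc_eq_false j N (hzero u hu))
  obtain ⟨H, hH, hstar⟩ := HistoryGraph.exists_of_children (historyChildren G j N ω) N o T
    (fun _ _ => mem_historyChildren) (fun _ => historyChildren_of_mem)
    (fun u hu => one_le_of_bootstrapPerc_eq_false j N (hzero u hu))
    (fun ⟨x, _⟩ hu (h1 : _ = 1) => by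
      subst h1
      exact mem_of_bootstrapPerc_one_eq_false j N (hzero _ hu))
    (fun ⟨x, _⟩ hu hN => by
      obtain ⟨t, rfl⟩ := hsucc _ hu
      exact card_filter_fst_eq_historyChildren hN)
    (fun ⟨x, _⟩ hu hN => by
      obtain ⟨t, rfl⟩ := hsucc _ hu
      exact card_filter_fst_ne_historyChildren_bootstrapPerc (hzero _ hu) hN)
  exact ⟨H, fun u hu => hzero u (hH u hu), hstar⟩

open Paper in
/-- if Bootstrap Percolation with noise set `N` started from all ones has
`ω_o(T) = 0` with `T ≥ 1`, then there is a history graph for `(o, T)` for the `j`-neighbour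
Bootstrap Percolation which is present in `ω`. -/
theorem bootstrap_has_present_history_graph
    {V : Type*} [Infinite V]
    (G : SimpleGraph V) [DecidableRel G.Adj] [∀ v, Fintype (G.neighborSet v)]
    (hconn : G.Connected) (Δ : ℕ) (hΔ : ∀ x, G.degree x ≤ Δ)
    (j : ℕ) (hj1 : 1 ≤ j) (hjδ : ∀ x, j ≤ G.degree x)
    (N : Set (V × ℕ)) (hN : ∀ p ∈ N, 1 ≤ p.2)
    (o : V) (T : ℕ) (hT : 1 ≤ T)
    (h0 : bootstrapPerc G j N (fun _ => true) T o = false) :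
    ∃ H : HistoryGraph G j o T true,
      (∀ u ∈ H.U, bootstrapPerc G j N (fun _ => true) u.2 u.1 = false) ∧
      (∀ u ∈ H.U, (u ∈ N ↔ u ∈ H.Ustar)) :=
  bootstrap_has_present_history_graph_general G j N o T h0
end
end

section
/- Let χ be the j-threshold Consensus Process with noise set N ⊆ V×ℕ≥1 started from the all-ones configuration. If χ_o(T) = 0 for some (o,T) ∈ V×ℕ with T ≥ 1, then there exists a history graph ℋ = (𝒰, ℱ, 𝒰*) for (o,T) for the j-threshold Consensus Process that is present in χ, i.e. χ_x(t) = 0 for every (x,t) ∈ 𝒰, and (x,t) ∈ N if and only if (x,t) ∈ 𝒰*. -/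
open Classical
noncomputable section

/-!
Work backwards from a zero of `χ` at `(x, t + 1)` that is not caused by noise: fewer than `j` of
its neighbours were `1` at time `t`, so at least `deg x + 1 - j` of them were `0`, and we select
exactly that many. Following these selections from `(o, T)` only visits zeros of `χ`; it stops
exactly at noise points, and it reaches time `1` only at noise points, because from the all-ones
configuration every vertex with `j ≤ deg` becomes `1` at time `1` unless hit by noise. The vertices
reached and the selection edges between them form the required history graph.
-/

theorem Set.finite_setOf_reflTransGen_of_lt {α : Type*} (s : α → Finset α) (f : α → ℕ)
    (hf : ∀ a, ∀ b ∈ s a, f b < f a) (a : α) :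
    {b | Relation.ReflTransGen (fun x y => y ∈ s x) a b}.Finite := by
  induction h : f a using Nat.strong_induction_on generalizing a with
  | _ n ih =>
    have hsub : {b | Relation.ReflTransGen (fun x y => y ∈ s x) a b} ⊆
        {a} ∪ ⋃ c ∈ (s a : Set α), {b | Relation.ReflTransGen (fun x y => y ∈ s x) c b} := by
      intro b hb
      rcases Relation.ReflTransGen.cases_head_iff.1 hb with rfl | ⟨c, hc, hcb⟩
      · exact Or.inl rfl
      · exact Or.inr (Set.mem_biUnion (Finset.mem_coe.2 hc) hcb)
    refine ((Set.finite_singleton a).union ((s a).finite_toSet.biUnion fun c hc => ?_)).subset hsub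
    exact ih (f c) (h ▸ hf a c hc) c rfl

namespace Paper

open Finset

variable {V : Type*} (G : SimpleGraph V) [∀ v, Fintype (G.neighborSet v)]

def falseNeighbors (η : V → Bool) (x : V) : Finset V :=
  (G.neighborFinset x).filter fun y => η y = false

variable (j : ℕ)

/-- `deg x + 1 - j` neighbours of `x` that are `0` in `η`, whenever there are that many. -/
def witnesses (η : V → Bool) (x : V) : Finset V :=
  (exists_subset_card_eq (min_le_right (G.degree x + 1 - j) #(falseNeighbors G η x))).choose

theorem witnesses_subset (η : V → Bool) (x : V) :
    witnesses G j η x ⊆ falseNeighbors G η x :=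
  (exists_subset_card_eq (min_le_right _ _)).choose_spec.1

variable [DecidableRel G.Adj] (N : Set (V × ℕ)) (ξ : V → Bool)

theorem cCount_add_card_falseNeighbors (η : V → Bool) (x : V) :
    cCount G η x + #(falseNeighbors G η x) = G.degree x := by
  simpa [cCount, falseNeighbors] using
    card_filter_add_card_filter_not (s := G.neighborFinset x) (fun y => η y = true)

theorem card_witnesses {η : V → Bool} {x : V} (hx : cCount G η x < j) :
    #(witnesses G j η x) = G.degree x + 1 - j := by
  rw [witnesses, (exists_subset_card_eq (min_le_right _ _)).choose_spec.2, min_eq_left]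
  have := cCount_add_card_falseNeighbors G η x
  omega

theorem consensus_succ_eq_false_iff (t : ℕ) (x : V) :
    consensus G j N ξ (t + 1) x = false ↔
      (x, t + 1) ∈ N ∨ cCount G (consensus G j N ξ t) x < j := by
  by_cases hx : (x, t + 1) ∈ N <;> simp [consensus, hx]

theorem one_le_of_consensus_eq_false {t : ℕ} {x : V}
    (hx : consensus G j N (fun _ => true) t x = false) : 1 ≤ t :=
  Nat.one_le_iff_ne_zero.2 fun ht => by simp [ht, consensus] at hx

theorem mem_of_consensus_eq_false_of_snd_eq_one (hjδ : ∀ x, j ≤ G.degree x) {u : V × ℕ}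
    (h1 : u.2 = 1) (hu : consensus G j N (fun _ => true) u.2 u.1 = false) : u ∈ N := by
  obtain ⟨x, t⟩ := u
  obtain rfl : t = 1 := h1
  have hall : cCount G (fun _ => true) x = G.degree x := by
    simp [cCount, SimpleGraph.card_neighborFinset_eq_degree]
  simpa [consensus_succ_eq_false_iff, consensus, hall, (hjδ x).not_gt] using hu

def historySucc : V × ℕ → Finset (V × ℕ)
  | (_, 0) => ∅
  | (x, t + 1) =>
    if (x, t + 1) ∈ N then ∅ else (witnesses G j (consensus G j N ξ t) x).image (·, t)

theorem of_mem_historySucc {u v : V × ℕ} (hv : v ∈ historySucc G j N ξ u) :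
    u.2 = v.2 + 1 ∧ u ∉ N ∧ G.Adj u.1 v.1 ∧ consensus G j N ξ v.2 v.1 = false := by
  obtain ⟨x, _ | t⟩ := u
  · simp [historySucc] at hv
  · by_cases hx : (x, t + 1) ∈ N
    · simp [historySucc, hx] at hv
    · simp only [historySucc, hx, if_false, mem_image] at hv
      obtain ⟨y, hy, rfl⟩ := hv
      have := witnesses_subset G j _ x hy
      simp only [falseNeighbors, mem_filter, SimpleGraph.mem_neighborFinset] at this
      exact ⟨rfl, hx, this⟩

theorem historySucc_eq_empty {u : V × ℕ} (hu : u ∈ N) : historySucc G j N ξ u = ∅ := by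
  obtain ⟨x, _ | t⟩ := u <;> simp [historySucc, hu]

theorem card_historySucc {x : V} {t : ℕ} (hx : consensus G j N ξ (t + 1) x = false)
    (hN : (x, t + 1) ∉ N) : #(historySucc G j N ξ (x, t + 1)) = G.degree x + 1 - j := by
  have hlt := ((consensus_succ_eq_false_iff G j N ξ t x).1 hx).resolve_left hN
  simp only [historySucc, hN, if_false]
  rw [card_image_of_injective _ fun a b h => (Prod.mk.inj h).1, card_witnesses G j hlt]

def historyVertices (r : V × ℕ) : Finset (V × ℕ) :=
  (Set.finite_setOf_reflTransGen_of_lt (historySucc G j N ξ) Prod.snd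
    (fun _ _ hb => by have := (of_mem_historySucc G j N ξ hb).1; omega) r).toFinset

theorem mem_historyVertices {r u : V × ℕ} :
    u ∈ historyVertices G j N ξ r ↔
      Relation.ReflTransGen (fun a b => b ∈ historySucc G j N ξ a) r u := by
  simp [historyVertices]

def historyEdges (r : V × ℕ) : Finset ((V × ℕ) × (V × ℕ)) :=
  (historyVertices G j N ξ r).biUnion fun u => (historySucc G j N ξ u).image (u, ·)

theorem mem_historyEdges {r : V × ℕ} {e : (V × ℕ) × (V × ℕ)} :
    e ∈ historyEdges G j N ξ r ↔
      e.1 ∈ historyVertices G j N ξ r ∧ e.2 ∈ historySucc G j N ξ e.1 := by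
  constructor
  · simp only [historyEdges, mem_biUnion, mem_image]
    rintro ⟨u, hu, v, hv, rfl⟩
    exact ⟨hu, hv⟩
  · exact fun ⟨hu, hv⟩ => mem_biUnion.2 ⟨e.1, hu, mem_image.2 ⟨e.2, hv, rfl⟩⟩

theorem succ_mem_historyVertices {r u v : V × ℕ} (hu : u ∈ historyVertices G j N ξ r)
    (hv : v ∈ historySucc G j N ξ u) : v ∈ historyVertices G j N ξ r :=
  (mem_historyVertices G j N ξ).2 (((mem_historyVertices G j N ξ).1 hu).tail hv)

theorem reflTransGen_historyEdges {r u : V × ℕ} (hu : u ∈ historyVertices G j N ξ r) :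
    Relation.ReflTransGen (fun a b => (a, b) ∈ historyEdges G j N ξ r) r u := by
  induction (mem_historyVertices G j N ξ).1 hu with
  | refl => exact .refl
  | @tail a b hra hab ih =>
    have ha := (mem_historyVertices G j N ξ).2 hra
    exact (ih ha).tail ((mem_historyEdges G j N ξ).2 ⟨ha, hab⟩)

theorem consensus_eq_false_of_mem_historyVertices (hjδ : ∀ x, j ≤ G.degree x) {o : V} {T : ℕ}
    (h0 : consensus G j N (fun _ => true) T o = false) {u : V × ℕ}
    (hu : u ∈ historyVertices G j N (fun _ => true) (o, T)) :
    consensus G j N (fun _ => true) u.2 u.1 = false ∧ 1 ≤ u.2 ∧ u.2 ≤ T := by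
  induction (mem_historyVertices G j N _).1 hu with
  | refl => exact ⟨h0, one_le_of_consensus_eq_false G j N h0, le_rfl⟩
  | @tail a b hra hab ih =>
    obtain ⟨ha0, -, haT⟩ := ih ((mem_historyVertices G j N _).2 hra)
    obtain ⟨htime, hN, -, hb0⟩ := of_mem_historySucc G j N _ hab
    refine ⟨hb0, Nat.one_le_iff_ne_zero.2 fun hb => hN ?_, by omega⟩
    exact mem_of_consensus_eq_false_of_snd_eq_one G j N hjδ (by omega) ha0

theorem historyEdges_connected {r u v : V × ℕ} (hu : u ∈ historyVertices G j N ξ r)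
    (hv : v ∈ historyVertices G j N ξ r) :
    Relation.ReflTransGen
      (fun a b => (a, b) ∈ historyEdges G j N ξ r ∨ (b, a) ∈ historyEdges G j N ξ r) u v := by
  have hru := Relation.reflTransGen_swap.2 (reflTransGen_historyEdges G j N ξ hu)
  exact (Relation.ReflTransGen.mono (fun _ _ => Or.inr) _ _ hru).trans
    (Relation.ReflTransGen.mono (fun _ _ => Or.inl) _ _ (reflTransGen_historyEdges G j N ξ hv))

theorem filter_historyEdges_straight (r u : V × ℕ) :
    (historyEdges G j N ξ r).filter (fun e => e.1 = u ∧ e.2.1 = u.1) = ∅ := by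
  refine filter_eq_empty_iff.2 ?_
  rintro e he ⟨rfl, heq⟩
  exact ((of_mem_historySucc G j N ξ ((mem_historyEdges G j N ξ).1 he).2).2.2.1).ne heq.symm

theorem filter_historyEdges_oblique {r u : V × ℕ} (hu : u ∈ historyVertices G j N ξ r) :
    (historyEdges G j N ξ r).filter (fun e => e.1 = u ∧ e.2.1 ≠ u.1) =
      (historySucc G j N ξ u).image (u, ·) := by
  ext e
  simp only [mem_filter, mem_image, mem_historyEdges]
  constructor
  · rintro ⟨⟨-, he⟩, rfl, -⟩
    exact ⟨e.2, he, rfl⟩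
  · rintro ⟨v, hv, rfl⟩
    exact ⟨⟨hu, hv⟩, rfl, ((of_mem_historySucc G j N ξ hv).2.2.1).ne'⟩

def historyGraph (hjδ : ∀ x, j ≤ G.degree x) (o : V) (T : ℕ)
    (h0 : consensus G j N (fun _ => true) T o = false) : HistoryGraph G j o T false :=
  have hU {u} (hu : u ∈ historyVertices G j N _ (o, T)) :=
    consensus_eq_false_of_mem_historyVertices G j N hjδ h0 hu
  have hF {e} (he : e ∈ historyEdges G j N _ (o, T)) :=
    (mem_historyEdges G j N _).1 he
  { U := historyVertices G j N (fun _ => true) (o, T)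
    F := historyEdges G j N (fun _ => true) (o, T)
    Ustar := (historyVertices G j N (fun _ => true) (o, T)).filter (· ∈ N)
    ustar_subset := filter_subset _ _
    edge_mem_fst := fun e he => (hF he).1
    edge_mem_snd := fun e he => succ_mem_historyVertices G j N _ (hF he).1 (hF he).2
    edge_time := fun e he => (of_mem_historySucc G j N _ (hF he).2).1
    edge_space := fun e he => Or.inr (of_mem_historySucc G j N _ (hF he).2).2.2.1
    conn := fun u hu v hv => historyEdges_connected G j N _ hu hv
    root_mem := (mem_historyVertices G j N _).2 .refl
    time_range := fun u hu _ => (hU hu).2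
    time_one_star := fun u hu h1 =>
      mem_filter.2 ⟨hu, mem_of_consensus_eq_false_of_snd_eq_one G j N hjδ h1 (hU hu).1⟩
    star_no_out := fun u hu e he heu => by
      have := (hF he).2
      rw [heu, historySucc_eq_empty G j N _ (mem_filter.1 hu).2] at this
      exact notMem_empty _ this
    straight_count := fun u _ _ => by
      rw [filter_historyEdges_straight, card_empty, cond_false]
    oblique_count := fun u hu hus => by
      have hN : u ∉ N := fun h => hus (mem_filter.2 ⟨hu, h⟩)
      obtain ⟨h0u, h1u, -⟩ := hU hu
      obtain ⟨x, _ | t⟩ := u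
      · cases h1u
      rw [filter_historyEdges_oblique G j N _ hu,
        card_image_of_injective _ fun a b h => (Prod.mk.inj h).2]
      exact card_historySucc G j N _ h0u hN }

theorem mem_ustar_historyGraph_iff (hjδ : ∀ x, j ≤ G.degree x) {o : V} {T : ℕ}
    (h0 : consensus G j N (fun _ => true) T o = false) {u : V × ℕ}
    (hu : u ∈ (historyGraph G j N hjδ o T h0).U) :
    u ∈ (historyGraph G j N hjδ o T h0).Ustar ↔ u ∈ N :=
  ⟨fun h => (mem_filter.1 h).2, fun h => mem_filter.2 ⟨hu, h⟩⟩

end Paper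

open Paper in
theorem consensus_has_present_history_graph_general
    {V : Type*}
    (G : SimpleGraph V) [DecidableRel G.Adj] [∀ v, Fintype (G.neighborSet v)]
    (j : ℕ) (hjδ : ∀ x, j ≤ G.degree x)
    (N : Set (V × ℕ))
    (o : V) (T : ℕ)
    (h0 : consensus G j N (fun _ => true) T o = false) :
    ∃ H : HistoryGraph G j o T false,
      (∀ u ∈ H.U, consensus G j N (fun _ => true) u.2 u.1 = false) ∧
      (∀ u ∈ H.U, (u ∈ N ↔ u ∈ H.Ustar)) :=
  ⟨historyGraph G j N hjδ o T h0,
    fun _ hu => (consensus_eq_false_of_mem_historyVertices G j N hjδ h0 hu).1,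
    fun _ hu => (mem_ustar_historyGraph_iff G j N hjδ h0 hu).symm⟩

open Paper in
/-- if the `j`-threshold Consensus Process with noise set `N` started from all ones
has `χ_o(T) = 0` with `T ≥ 1`, then there is a history graph for `(o, T)` for the `j`-threshold
Consensus Process which is present in `χ`. -/
theorem consensus_has_present_history_graph
    {V : Type*} [Infinite V]
    (G : SimpleGraph V) [DecidableRel G.Adj] [∀ v, Fintype (G.neighborSet v)]
    (hconn : G.Connected) (Δ : ℕ) (hΔ : ∀ x, G.degree x ≤ Δ)
    (j : ℕ) (hj1 : 1 ≤ j) (hjδ : ∀ x, j ≤ G.degree x)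
    (N : Set (V × ℕ)) (hN : ∀ p ∈ N, 1 ≤ p.2)
    (o : V) (T : ℕ) (hT : 1 ≤ T)
    (h0 : consensus G j N (fun _ => true) T o = false) :
    ∃ H : HistoryGraph G j o T false,
      (∀ u ∈ H.U, consensus G j N (fun _ => true) u.2 u.1 = false) ∧
      (∀ u ∈ H.U, (u ∈ N ↔ u ∈ H.Ustar)) :=
  consensus_has_present_history_graph_general G j hjδ N o T h0
end
end

section
/- Let ℋ = (𝒰, ℱ, 𝒰*) be a history graph for (o,T) for either the j-threshold Consensus Process or the j-neighbour Bootstrap Percolation. Then, as an inequality of real numbers, (3·Φ_E(G) − Δ − 2j + 2)·|𝒰| + Δ − Φ_E(G) ≤ 2·(Φ_E(G) − j + 1)·|𝒰*|. -/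
open Classical
noncomputable section

/-! Slice `𝒰` by time: let `K_t ⊆ V` be the vertices of `𝒰` at time `t` and `S_{t+1} ⊆ V` those
of `𝒰 \ 𝒰*` at time `t + 1`. A vertex of `S_{t+1}` has `deg x − j + 1` oblique edges to distinct
neighbours in `K_t`, so fewer than `j` of its neighbours lie outside `K_t`. Submodularity of the
edge boundary gives `Φ (|S| + |K|) ≤ e(S, Kᶜ) + e(K, Sᶜ)`; as `e(K, Sᶜ) ≤ Δ |K| − e(S, K)`
and `e(S, K) = Σ_S deg − e(S, Kᶜ)` with `Φ ≤ deg`, this yields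
`2 (Φ − j + 1) |S_{t+1}| ≤ (Δ − Φ) |K_t|`.
Since `j ≤ δ`, every vertex of `𝒰 \ 𝒰*` has an outgoing edge, hence time at least `1`, so the
`S_{t+1}` with `t < T` exhaust `𝒰 \ 𝒰*`, while the `K_t` with `t < T` miss the root. Summing gives
`2 (Φ − j + 1) (|𝒰| − |𝒰*|) ≤ (Δ − Φ) (|𝒰| − 1)`, which is the claim rearranged. -/

open Finset

namespace Paper

variable {V : Type*} {G : SimpleGraph V} [∀ v, Fintype (G.neighborSet v)]

theorem sum_card_neighborFinset_filter_eq_sum_ite {A W : Finset V} (B : Finset V) (hA : A ⊆ W) :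
    ∑ x ∈ A, #{y ∈ G.neighborFinset x | y ∉ B} =
      ∑ x ∈ W, ∑ y ∈ G.neighborFinset x, if x ∈ A ∧ y ∉ B then 1 else 0 := by
  have hx : ∀ x, (∑ y ∈ G.neighborFinset x, if x ∈ A ∧ y ∉ B then 1 else 0) =
      if x ∈ A then #{y ∈ G.neighborFinset x | y ∉ B} else 0 := by
    intro x
    split_ifs with hx <;> simp [card_filter, hx]
  simp_rw [hx, ← sum_filter, filter_mem_eq_inter, inter_eq_right.mpr hA]

variable [DecidableRel G.Adj]

theorem edgeExpansion_mul_card_le (K : Finset V) :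
    edgeExpansion G * #K ≤ edgeBoundaryCard G K := by
  rcases K.eq_empty_or_nonempty with rfl | hK
  · simp
  · have hbdd : BddBelow {r : ℝ | ∃ K : Finset V, K.Nonempty ∧
        r = (edgeBoundaryCard G K : ℝ) / (#K : ℝ)} :=
      ⟨0, by rintro r ⟨K, -, rfl⟩; positivity⟩
    rw [← le_div_iff₀ (by exact_mod_cast hK.card_pos)]
    exact csInf_le hbdd ⟨K, hK, rfl⟩

theorem edgeBoundaryCard_singleton (x : V) : edgeBoundaryCard G {x} = G.degree x := by
  rw [edgeBoundaryCard, sum_singleton, ← G.card_neighborFinset_eq_degree]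
  congr 1
  exact filter_true_of_mem fun y hy =>
    mem_singleton.not.mpr ((G.mem_neighborFinset x y).mp hy).ne'

theorem edgeExpansion_le_degree (x : V) : edgeExpansion G ≤ G.degree x := by
  simpa [edgeBoundaryCard_singleton] using edgeExpansion_mul_card_le (G := G) {x}

theorem edgeBoundaryCard_inter_add_union_le (S K : Finset V) :
    edgeBoundaryCard G (S ∩ K) + edgeBoundaryCard G (S ∪ K) ≤
      ∑ x ∈ S, #{y ∈ G.neighborFinset x | y ∉ K} +
        ∑ y ∈ K, #{z ∈ G.neighborFinset y | z ∉ S} := by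
  simp only [edgeBoundaryCard]
  rw [sum_card_neighborFinset_filter_eq_sum_ite _ inter_subset_union,
    sum_card_neighborFinset_filter_eq_sum_ite _ (subset_refl (S ∪ K)),
    sum_card_neighborFinset_filter_eq_sum_ite _ (subset_union_left (s₂ := K)),
    sum_card_neighborFinset_filter_eq_sum_ite _ (subset_union_right (s₁ := S)),
    ← sum_add_distrib, ← sum_add_distrib]
  refine sum_le_sum fun x _ => ?_
  rw [← sum_add_distrib, ← sum_add_distrib]
  refine sum_le_sum fun y _ => ?_
  by_cases hxS : x ∈ S <;> by_cases hxK : x ∈ K <;> by_cases hyS : y ∈ S <;>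
    by_cases hyK : y ∈ K <;> simp [hxS, hxK, hyS, hyK]

theorem edgeExpansion_mul_card_add_card_le (S K : Finset V) :
    edgeExpansion G * (#S + #K) ≤
      (∑ x ∈ S, #{y ∈ G.neighborFinset x | y ∉ K} : ℕ) +
        (∑ y ∈ K, #{z ∈ G.neighborFinset y | z ∉ S} : ℕ) := by
  have hcard : (#S + #K : ℝ) = #(S ∩ K) + #(S ∪ K) := by
    exact_mod_cast (card_inter_add_card_union S K).symm
  calc edgeExpansion G * (#S + #K)
      = edgeExpansion G * #(S ∩ K) + edgeExpansion G * #(S ∪ K) := by rw [hcard, mul_add]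
    _ ≤ edgeBoundaryCard G (S ∩ K) + edgeBoundaryCard G (S ∪ K) :=
      add_le_add (edgeExpansion_mul_card_le _) (edgeExpansion_mul_card_le _)
    _ ≤ _ := by exact_mod_cast edgeBoundaryCard_inter_add_union_le S K

theorem two_mul_edgeExpansion_sub_mul_card_le {S K : Finset V} {j Δ : ℕ}
    (hS : ∀ x ∈ S, #{y ∈ G.neighborFinset x | y ∉ K} < j) (hK : ∀ y ∈ K, G.degree y ≤ Δ) :
    2 * (edgeExpansion G - j + 1) * #S ≤ (Δ - edgeExpansion G) * #K := by
  set outS := ∑ x ∈ S, #{y ∈ G.neighborFinset x | y ∉ K}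
  set outK := ∑ y ∈ K, #{z ∈ G.neighborFinset y | z ∉ S}
  set between := ∑ y ∈ K, #{x ∈ S | G.Adj y x}
  have hsplit (x : V) (A : Finset V) :
      #{y ∈ G.neighborFinset x | y ∉ A} + #{y ∈ A | G.Adj x y} = G.degree x := by
    have : {y ∈ A | G.Adj x y} = {y ∈ G.neighborFinset x | ¬y ∉ A} := by
      ext y
      simp [and_comm]
    rw [this, card_filter_add_card_filter_not, G.card_neighborFinset_eq_degree]
  have hdouble : ∑ x ∈ S, #{y ∈ K | G.Adj x y} = between := by
    simpa only [bipartiteAbove, bipartiteBelow, G.adj_comm] using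
      sum_card_bipartiteAbove_eq_sum_card_bipartiteBelow G.Adj (s := S) (t := K)
  have hdegS : outS + between = ∑ x ∈ S, G.degree x := by
    rw [← hdouble, ← sum_add_distrib]
    exact sum_congr rfl fun x _ => hsplit x K
  have hdegK : outK + between ≤ Δ * #K :=
    calc outK + between = ∑ y ∈ K, G.degree y := by
          rw [← sum_add_distrib]
          exact sum_congr rfl fun y _ => hsplit y S
      _ ≤ ∑ _y ∈ K, Δ := sum_le_sum hK
      _ = Δ * #K := by rw [sum_const, smul_eq_mul, mul_comm]
  have hfew : outS + #S ≤ j * #S :=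
    calc outS + #S = ∑ x ∈ S, (#{y ∈ G.neighborFinset x | y ∉ K} + 1) := by
          rw [sum_add_distrib, card_eq_sum_ones]
      _ ≤ ∑ _x ∈ S, j := sum_le_sum hS
      _ = j * #S := by rw [sum_const, smul_eq_mul, mul_comm]
  have hexpS : edgeExpansion G * #S ≤ outS + between := by
    calc edgeExpansion G * #S = ∑ _x ∈ S, edgeExpansion G := by
          rw [sum_const, nsmul_eq_mul, mul_comm]
      _ ≤ ∑ x ∈ S, (G.degree x : ℝ) := sum_le_sum fun x _ => edgeExpansion_le_degree x
      _ = outS + between := by exact_mod_cast hdegS.symm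
  have hexp : edgeExpansion G * (#S + #K) ≤ outS + outK := edgeExpansion_mul_card_add_card_le S K
  have hdegK' : (outK + between : ℝ) ≤ Δ * #K := by exact_mod_cast hdegK
  have hfew' : (outS + #S : ℝ) ≤ j * #S := by exact_mod_cast hfew
  linarith

def timeSlice (X : Finset (V × ℕ)) (t : ℕ) : Finset V :=
  X.preimage (·, t) fun _ _ _ _ h => (Prod.mk.inj h).1

@[simp]
theorem mem_timeSlice {X : Finset (V × ℕ)} {t : ℕ} {x : V} : x ∈ timeSlice X t ↔ (x, t) ∈ X :=
  mem_preimage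

theorem card_timeSlice (X : Finset (V × ℕ)) (t : ℕ) : #(timeSlice X t) = #{p ∈ X | p.2 = t} := by
  refine card_nbij (·, t) (fun x hx => by simpa using hx) (fun _ _ _ _ h => (Prod.mk.inj h).1) ?_
  rintro ⟨x, s⟩ hp
  obtain ⟨hX, rfl⟩ := mem_filter.mp (mem_coe.mp hp)
  exact ⟨x, by simpa using hX, rfl⟩

theorem sum_card_timeSlice (X : Finset (V × ℕ)) (s : Finset ℕ) :
    ∑ t ∈ s, #(timeSlice X t) = #{p ∈ X | p.2 ∈ s} := by
  simp only [card_timeSlice, sum_card_fiberwise_eq_card_filter]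

namespace HistoryGraph

variable {j : ℕ} {o : V} {T : ℕ} {bp : Bool} (H : HistoryGraph G j o T bp)

theorem degree_add_one_sub_le_card_neighborFinset_filter_mem_timeSlice {x : V} {t : ℕ}
    (hx : (x, t + 1) ∈ H.U) (hx' : (x, t + 1) ∉ H.Ustar) :
    G.degree x + 1 - j ≤ #{y ∈ G.neighborFinset x | y ∈ timeSlice H.U t} := by
  rw [← H.oblique_count _ hx hx']
  refine card_le_card_of_injOn (·.2.1) (fun e he => ?_) (fun e he f hf hef => ?_)
  · obtain ⟨heF, he1, hne⟩ := mem_filter.mp (mem_coe.mp he)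
    have htime := H.edge_time e heF
    have hspace := H.edge_space e heF
    simp only [he1] at htime hspace
    have hadj := hspace.resolve_left (Ne.symm hne)
    refine mem_coe.mpr (mem_filter.mpr ⟨(G.mem_neighborFinset _ _).mpr hadj, ?_⟩)
    have hsnd : e.2 = (e.2.1, t) := Prod.ext rfl (by omega)
    simpa [← hsnd] using H.edge_mem_snd e heF
  · obtain ⟨heF, he1, -⟩ := mem_filter.mp (mem_coe.mp he)
    obtain ⟨hfF, hf1, -⟩ := mem_filter.mp (mem_coe.mp hf)
    have := H.edge_time e heF
    have := H.edge_time f hfF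
    ext <;> simp_all

theorem card_neighborFinset_filter_notMem_timeSlice_lt {x : V} {t : ℕ}
    (hx : (x, t + 1) ∈ H.U) (hx' : (x, t + 1) ∉ H.Ustar) :
    #{y ∈ G.neighborFinset x | y ∉ timeSlice H.U t} < j := by
  have hsplit := card_filter_add_card_filter_not (s := G.neighborFinset x) (· ∈ timeSlice H.U t)
  have := H.degree_add_one_sub_le_card_neighborFinset_filter_mem_timeSlice hx hx'
  rw [G.card_neighborFinset_eq_degree] at hsplit
  omega

theorem time_le {u : V × ℕ} (hu : u ∈ H.U) : u.2 ≤ T := by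
  by_cases h : u = (o, T)
  · rw [h]
  · exact (H.time_range u hu h).2

theorem one_le_time {u : V × ℕ} (hj : j ≤ G.degree u.1) (hu : u ∈ H.U) (hu' : u ∉ H.Ustar) :
    1 ≤ u.2 := by
  have hcard := H.oblique_count u hu hu'
  obtain ⟨e, he⟩ : (H.F.filter fun e => e.1 = u ∧ e.2.1 ≠ u.1).Nonempty := by
    rw [← card_pos, hcard]
    omega
  obtain ⟨heF, rfl, -⟩ := mem_filter.mp he
  have := H.edge_time e heF
  omega

theorem sum_card_timeSlice_add_one_le : ∑ t ∈ range T, #(timeSlice H.U t) + 1 ≤ #H.U := by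
  rw [sum_card_timeSlice]
  exact card_lt_card (filter_ssubset.mpr ⟨(o, T), H.root_mem, by simp⟩)

theorem sum_card_timeSlice_succ_sdiff (hj : ∀ x, j ≤ G.degree x) :
    ∑ t ∈ range T, #(timeSlice (H.U \ H.Ustar) (t + 1)) = #(H.U \ H.Ustar) := by
  have hbottom : timeSlice (H.U \ H.Ustar) 0 = ∅ := by
    ext x
    simp only [mem_timeSlice, mem_sdiff, notMem_empty, iff_false, not_and, not_not]
    intro hx
    by_contra hx'
    simpa using H.one_le_time (hj x) hx hx'
  have htop : #{p ∈ H.U \ H.Ustar | p.2 ∈ range (T + 1)} = #(H.U \ H.Ustar) := by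
    rw [filter_true_of_mem fun p hp => mem_range_succ_iff.mpr (H.time_le (mem_sdiff.mp hp).1)]
  rw [← htop, ← sum_card_timeSlice, sum_range_succ', hbottom, card_empty, add_zero]

end HistoryGraph

end Paper

open Paper in
theorem historyGraph_edge_expansion_inequality_general
    {V : Type*}
    (G : SimpleGraph V) [DecidableRel G.Adj] [∀ v, Fintype (G.neighborSet v)]
    (Δ : ℕ) (hΔ : IsLUB (Set.range fun x => G.degree x) Δ)
    (δ : ℕ) (hδ : IsGLB (Set.range fun x => G.degree x) δ)
    (j : ℕ) (hjδ : j ≤ δ)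
    (o : V) (T : ℕ) (bp : Bool) (H : HistoryGraph G j o T bp) :
    (3 * edgeExpansion G - Δ - 2 * j + 2) * H.U.card + Δ - edgeExpansion G ≤
      2 * (edgeExpansion G - j + 1) * H.Ustar.card := by
  have hdeg (x : V) : G.degree x ≤ Δ := hΔ.1 ⟨x, rfl⟩
  have hj (x : V) : j ≤ G.degree x := hjδ.trans (hδ.1 ⟨x, rfl⟩)
  have hΦΔ : edgeExpansion G ≤ Δ := (edgeExpansion_le_degree o).trans (by exact_mod_cast hdeg o)
  have hlevels : ∑ t ∈ range T, 2 * (edgeExpansion G - j + 1) *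
        (#(timeSlice (H.U \ H.Ustar) (t + 1)) : ℝ) ≤
      ∑ t ∈ range T, (Δ - edgeExpansion G) * (#(timeSlice H.U t) : ℝ) := by
    refine sum_le_sum fun t _ => two_mul_edgeExpansion_sub_mul_card_le (fun x hx => ?_)
      fun y _ => hdeg y
    obtain ⟨hxU, hxU'⟩ := mem_sdiff.mp (mem_timeSlice.mp hx)
    exact H.card_neighborFinset_filter_notMem_timeSlice_lt hxU hxU'
  have hactive : (∑ t ∈ range T, (#(timeSlice (H.U \ H.Ustar) (t + 1)) : ℝ)) =
      #H.U - #H.Ustar := by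
    rw [← cast_card_sdiff H.ustar_subset, ← H.sum_card_timeSlice_succ_sdiff hj, Nat.cast_sum]
  have hlower : (∑ t ∈ range T, (#(timeSlice H.U t) : ℝ)) + 1 ≤ #H.U := by
    exact_mod_cast H.sum_card_timeSlice_add_one_le
  rw [← mul_sum, ← mul_sum, hactive] at hlevels
  linarith [mul_le_mul_of_nonneg_left hlower (sub_nonneg.mpr hΦΔ)]

open Paper in
/-- the first history-graph counting inequality (Lemma 4.5, ineq. (4.3)),
valid both for the Consensus Process (`bp = false`) and for Bootstrap Percolation
(`bp = true`). -/
theorem historyGraph_edge_expansion_inequality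
    {V : Type*} [Infinite V]
    (G : SimpleGraph V) [DecidableRel G.Adj] [∀ v, Fintype (G.neighborSet v)]
    (hconn : G.Connected)
    (Δ : ℕ) (hΔ : IsLUB (Set.range fun x => G.degree x) Δ)
    (δ : ℕ) (hδ : IsGLB (Set.range fun x => G.degree x) δ)
    (j : ℕ) (hj1 : 1 ≤ j) (hjδ : j ≤ δ)
    (o : V) (T : ℕ) (bp : Bool) (H : HistoryGraph G j o T bp) :
    (3 * edgeExpansion G - Δ - 2 * j + 2) * H.U.card + Δ - edgeExpansion G ≤
      2 * (edgeExpansion G - j + 1) * H.Ustar.card :=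
  historyGraph_edge_expansion_inequality_general G Δ hΔ δ hδ j hjδ o T bp H
end
end

section
/- Let 𝒯 = ([n], Ē, ψ) be a Toom cycle rooted at some (o,T) ∈ V×ℕ that is present in the typed dependence graph associated with the Bootstrap Percolation charges A_1^x = {x}, A_2^x (for a witness root r of j ≤ j̄) and an arbitrary noise set N ⊆ V×ℕ≥1. Then |V_∘| = |V_*|, |Ē_1| = |Ē_2|, and |Ē| = 4·(|V_*| − 1). -/
/-!
Every edge of the typed dependence graph lowers the time coordinate by one; a type-2 edge moves
one step away from the root `r`, a type-1 edge keeps the distance. Walking once around a present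
Toom cycle, the time coordinate telescopes to `|Ē_1| = |Ē_2|`. The distance from `r` telescopes
too: type-2 edges are traversed forwards exactly at `V_∘ \ {0}` and backwards exactly into
`V_2 ∪ {0}`, so `|V_∘| = |V_2| + 2`. In any oriented cycle sources and sinks are equinumerous,
and `|Ē| = 2 |Ē_2| = 2 (|V_2| + |V_*|)` gives `|Ē| = 4 (|V_*| - 1)`.
-/

open Classical
noncomputable section

namespace Toom

/-- The upward edge between cyclic positions `v` and `v + 1`. -/
def edgeUp (v : ℕ) : ℕ × ℕ := (v, v + 1)

/-- The downward edge between cyclic positions `v + 1` and `v`. -/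
def edgeDown (v : ℕ) : ℕ × ℕ := (v + 1, v)

/-- The cyclic predecessor of `v` in `[n] = {0, …, n − 1}`. -/
def prev (n v : ℕ) : ℕ := (v + n - 1) % n

/-- `V_∘`: positions with two outgoing edges.  (Following the convention of the paper, the
edge between `0` and `n − 1` is recorded as `(n − 1, n)` if oriented upwards and as
`(n, n − 1)` if oriented downwards.) -/
def Vcirc (n : ℕ) (E : Finset (ℕ × ℕ)) : Finset ℕ :=
  (Finset.range n).filter fun v => edgeDown (prev n v) ∈ E ∧ edgeUp v ∈ E

/-- `V_*`: positions with two incoming edges (the sinks). -/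
def Vstar (n : ℕ) (E : Finset (ℕ × ℕ)) : Finset ℕ :=
  (Finset.range n).filter fun v => edgeUp (prev n v) ∈ E ∧ edgeDown v ∈ E

/-- `V_1`: positions traversed upwards. -/
def Vone (n : ℕ) (E : Finset (ℕ × ℕ)) : Finset ℕ :=
  (Finset.range n).filter fun v => edgeUp (prev n v) ∈ E ∧ edgeUp v ∈ E

/-- `V_2`: positions traversed downwards. -/
def Vtwo (n : ℕ) (E : Finset (ℕ × ℕ)) : Finset ℕ :=
  (Finset.range n).filter fun v => edgeDown v ∈ E ∧ edgeDown (prev n v) ∈ E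

/-- `Ē_1`: the increasing edges. -/
def E1 (E : Finset (ℕ × ℕ)) : Finset (ℕ × ℕ) := E.filter fun e => e.2 = e.1 + 1

/-- `Ē_2`: the decreasing edges. -/
def E2 (E : Finset (ℕ × ℕ)) : Finset (ℕ × ℕ) := E.filter fun e => e.1 = e.2 + 1

/-- A Toom cycle in `𝒱 = V × ℕ` rooted at `ψ 0` (Definition 4.10): an oriented cycle of length
`n`, encoded by its edge set `E`, with `0 ∈ V_∘`, together with a map `ψ : {0, …, n} → V × ℕ`
with `ψ n = ψ 0`, satisfying the two injectivity/ordering conditions. -/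
structure ToomCycle (V : Type*) (n : ℕ) where
  E : Finset (ℕ × ℕ)
  edge_form : ∀ e ∈ E, ∃ v < n, e = edgeUp v ∨ e = edgeDown v
  orient : ∀ v < n, (edgeUp v ∈ E ∧ edgeDown v ∉ E) ∨ (edgeUp v ∉ E ∧ edgeDown v ∈ E)
  ψ : ℕ → V × ℕ
  psi_cyc : ψ n = ψ 0
  zero_circ : 0 ∈ Vcirc n E
  cond_one : ∀ v ∈ Vstar n E, ∀ w < n, v ≠ w → ψ v ≠ ψ w
  cond_two : ∀ s t : Fin 3, s ≤ t →
    ∀ v, (v ∈ ![Vone n E, Vcirc n E, Vtwo n E] s ∨ v = 0) →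
    ∀ w, (w ∈ ![Vone n E, Vcirc n E, Vtwo n E] t ∨ w = 0) →
    ψ v = ψ w → v ≤ w

/-- `(a, b)` is a type-1 (straight) edge of the typed dependence graph with noise set `N`. -/
def Typed1 {V : Type*} (N : Set (V × ℕ)) (a b : V × ℕ) : Prop :=
  a ∉ N ∧ 1 ≤ a.2 ∧ b = (a.1, a.2 - 1)

/-- `(a, b)` is a type-2 (oblique) edge of the typed dependence graph with charges `A2` and
noise set `N`. -/
def Typed2 {V : Type*} (A2 : V → Finset V) (N : Set (V × ℕ)) (a b : V × ℕ) : Prop :=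
  a ∉ N ∧ 1 ≤ a.2 ∧ b.1 ∈ A2 a.1 ∧ b.2 = a.2 - 1

/-- A Toom cycle is present in the typed dependence graph determined by the charges
`A_1^x = {x}`, `A_2^x = A2 x` and the noise set `N` (Definition 4.10).  Sources of edges are
read modulo `n`, in accordance with the convention `ψ n = ψ 0`. -/
def IsPresent {V : Type*} (A2 : V → Finset V) (N : Set (V × ℕ)) {n : ℕ}
    (𝒯 : ToomCycle V n) : Prop :=
  2 ≤ n ∧
  (∀ v ∈ Vstar n 𝒯.E, 𝒯.ψ v ∈ N) ∧
  (∀ e ∈ E1 𝒯.E, (e.1 % n ∈ Vone n 𝒯.E ∨ e.1 % n = 0) →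
    Typed1 N (𝒯.ψ e.1) (𝒯.ψ e.2)) ∧
  (∀ e ∈ E2 𝒯.E, (e.1 % n ∈ Vtwo n 𝒯.E ∨ e.1 % n = 0) →
    Typed2 A2 N (𝒯.ψ e.1) (𝒯.ψ e.2)) ∧
  (∀ e ∈ E1 𝒯.E, (e.1 % n ∈ Vcirc n 𝒯.E ∧ e.1 % n ≠ 0) →
    Typed2 A2 N (𝒯.ψ e.1) (𝒯.ψ e.2)) ∧
  (∀ e ∈ E2 𝒯.E, (e.1 % n ∈ Vcirc n 𝒯.E ∧ e.1 % n ≠ 0) →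
    Typed1 N (𝒯.ψ e.1) (𝒯.ψ e.2))

end Toom

namespace Toom

open Finset

theorem prev_succ_mod {n v : ℕ} (hv : v < n) : prev n ((v + 1) % n) = v := by
  unfold prev
  rcases Nat.lt_or_ge (v + 1) n with h | h
  · rw [Nat.mod_eq_of_lt h, show v + 1 + n - 1 = v + n by omega, Nat.add_mod_right,
      Nat.mod_eq_of_lt hv]
  · rw [show v + 1 = n by omega, Nat.mod_self, zero_add, Nat.mod_eq_of_lt (by omega)]
    omega

theorem sum_range_succ_mod {M : Type*} [AddCommMonoid M] (n : ℕ) (f : ℕ → M) :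
    ∑ v ∈ range n, f ((v + 1) % n) = ∑ v ∈ range n, f v := by
  cases n with
  | zero => rfl
  | succ m =>
    rw [sum_range_succ, sum_range_succ', Nat.mod_self]
    congr 1
    exact sum_congr rfl fun v hv => by rw [Nat.mod_eq_of_lt (by simpa using hv)]

theorem sum_range_boole_mem {n : ℕ} {s : Finset ℕ} (hs : s ⊆ range n) :
    ∑ v ∈ range n, (if v ∈ s then (1 : ℤ) else 0) = #s := by
  rw [sum_boole, filter_mem_eq_inter, inter_eq_right.mpr hs]

theorem card_filter_range_prev {n : ℕ} (p : ℕ → Prop) [DecidablePred p] :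
    #((range n).filter fun v => p (prev n v)) = #((range n).filter p) := by
  rw [card_filter, card_filter, ← sum_range_succ_mod]
  exact sum_congr rfl fun v hv => by rw [prev_succ_mod (mem_range.mp hv)]

def IsOriented (n : ℕ) (E : Finset (ℕ × ℕ)) : Prop :=
  ∀ v < n, edgeDown v ∈ E ↔ edgeUp v ∉ E

def ups (n : ℕ) (E : Finset (ℕ × ℕ)) : Finset ℕ :=
  (range n).filter fun v => edgeUp v ∈ E

def downs (n : ℕ) (E : Finset (ℕ × ℕ)) : Finset ℕ :=
  (range n).filter fun v => edgeDown v ∈ E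

theorem ToomCycle.isOriented {V : Type*} {n : ℕ} (𝒯 : ToomCycle V n) : IsOriented n 𝒯.E :=
  fun v hv => by rcases 𝒯.orient v hv with h | h <;> simp [h]

section OrientedCycle

variable {n : ℕ} {E : Finset (ℕ × ℕ)}

theorem mem_Vone {v : ℕ} :
    v ∈ Vone n E ↔ v < n ∧ edgeUp (prev n v) ∈ E ∧ edgeUp v ∈ E := by
  simp [Vone]

namespace IsOriented

variable (ho : IsOriented n E)
include ho

theorem edgeDown_prev_mem_iff {v : ℕ} (hv : v < n) :
    edgeDown (prev n v) ∈ E ↔ edgeUp (prev n v) ∉ E :=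
  ho _ (Nat.mod_lt _ (by omega))

theorem mem_Vcirc {v : ℕ} :
    v ∈ Vcirc n E ↔ v < n ∧ edgeUp (prev n v) ∉ E ∧ edgeUp v ∈ E := by
  simp only [Vcirc, mem_filter, mem_range]
  exact and_congr_right fun hv => by rw [ho.edgeDown_prev_mem_iff hv]

theorem mem_Vstar {v : ℕ} :
    v ∈ Vstar n E ↔ v < n ∧ edgeUp (prev n v) ∈ E ∧ edgeUp v ∉ E := by
  simp only [Vstar, mem_filter, mem_range]
  exact and_congr_right fun hv => by rw [ho v hv]

theorem mem_Vtwo {v : ℕ} :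
    v ∈ Vtwo n E ↔ v < n ∧ edgeUp (prev n v) ∉ E ∧ edgeUp v ∉ E := by
  simp only [Vtwo, mem_filter, mem_range]
  exact and_congr_right fun hv => by rw [ho v hv, ho.edgeDown_prev_mem_iff hv, and_comm]

theorem downs_eq : downs n E = (range n).filter fun v => edgeUp v ∉ E :=
  filter_congr fun v hv => ho v (mem_range.mp hv)

theorem card_Vone_add_card_Vcirc : #(Vone n E) + #(Vcirc n E) = #(ups n E) := by
  rw [← card_filter_add_card_filter_not (s := ups n E) fun v => edgeUp (prev n v) ∈ E]
  congr 1 <;> congr 1 <;> ext v <;>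
    simp only [ups, mem_filter, mem_range, mem_Vone, ho.mem_Vcirc] <;> tauto

theorem card_Vtwo_add_card_Vstar : #(Vtwo n E) + #(Vstar n E) = #(downs n E) := by
  rw [ho.downs_eq, ← card_filter_add_card_filter_not
    (s := (range n).filter fun v => edgeUp v ∉ E) fun v => edgeUp (prev n v) ∉ E]
  congr 1 <;> congr 1 <;> ext v <;>
    simp only [mem_filter, mem_range, ho.mem_Vtwo, ho.mem_Vstar] <;> tauto

theorem card_Vone_add_card_Vstar : #(Vone n E) + #(Vstar n E) = #(ups n E) := by
  rw [ups, ← card_filter_range_prev fun v => edgeUp v ∈ E, ← card_filter_add_card_filter_not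
    (s := (range n).filter fun v => edgeUp (prev n v) ∈ E) fun v => edgeUp v ∈ E]
  congr 1 <;> congr 1 <;> ext v <;>
    simp only [mem_filter, mem_range, mem_Vone, ho.mem_Vstar] <;> tauto

theorem card_Vcirc_eq_card_Vstar : #(Vcirc n E) = #(Vstar n E) := by
  have := ho.card_Vone_add_card_Vcirc
  have := ho.card_Vone_add_card_Vstar
  omega

end IsOriented

variable (hE : ∀ e ∈ E, ∃ v < n, e = edgeUp v ∨ e = edgeDown v)
include hE

theorem card_E1_eq_card_ups : #(E1 E) = #(ups n E) := by
  suffices E1 E = (ups n E).image edgeUp by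
    rw [this, card_image_of_injective _ fun a b h => by simpa [edgeUp] using h]
  ext e
  simp only [E1, ups, mem_filter, mem_image, mem_range]
  constructor
  · rintro ⟨he, hform⟩
    obtain ⟨v, hv, rfl | rfl⟩ := hE e he
    · exact ⟨v, ⟨hv, he⟩, rfl⟩
    · simp only [edgeDown] at hform
      omega
  · rintro ⟨v, ⟨-, hv⟩, rfl⟩
    exact ⟨hv, rfl⟩

theorem card_E2_eq_card_downs : #(E2 E) = #(downs n E) := by
  suffices E2 E = (downs n E).image edgeDown by
    rw [this, card_image_of_injective _ fun a b h => by simpa [edgeDown] using h]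
  ext e
  simp only [E2, downs, mem_filter, mem_image, mem_range]
  constructor
  · rintro ⟨he, hform⟩
    obtain ⟨v, hv, rfl | rfl⟩ := hE e he
    · simp only [edgeUp] at hform
      omega
    · exact ⟨v, ⟨hv, he⟩, rfl⟩
  · rintro ⟨v, ⟨-, hv⟩, rfl⟩
    exact ⟨hv, rfl⟩

theorem card_E1_add_card_E2 : #(E1 E) + #(E2 E) = #E := by
  rw [E1, E2, ← card_filter_add_card_filter_not (s := E) fun e => e.2 = e.1 + 1]
  congr 2
  refine filter_congr fun e he => ?_
  obtain ⟨v, -, rfl | rfl⟩ := hE e he <;> simp [edgeUp, edgeDown] <;> omega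

end OrientedCycle

section TypedDependenceGraph

variable {V : Type*} {A2 : V → Finset V} {N : Set (V × ℕ)} {a b : V × ℕ}

theorem Typed1.time (h : Typed1 N a b) : (b.2 : ℤ) = a.2 - 1 := by
  obtain ⟨-, ha, rfl⟩ := h
  omega

theorem Typed2.time (h : Typed2 A2 N a b) : (b.2 : ℤ) = a.2 - 1 := by
  obtain ⟨-, ha, -, hb⟩ := h
  omega

theorem Typed2.potential {d : V → ℤ} (hd : ∀ x, ∀ z ∈ A2 x, d z = d x + 1)
    (hab : Typed2 A2 N a b) : d b.1 = d a.1 + 1 :=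
  hd _ _ hab.2.2.1

end TypedDependenceGraph

theorem ToomCycle.sum_range_sub_eq_zero {V : Type*} {n : ℕ} (𝒯 : ToomCycle V n)
    (g : V × ℕ → ℤ) : ∑ v ∈ range n, (g (𝒯.ψ (v + 1)) - g (𝒯.ψ v)) = 0 := by
  rw [sum_range_sub (fun v => g (𝒯.ψ v)), 𝒯.psi_cyc, sub_self]

namespace IsPresent

variable {V : Type*} {A2 : V → Finset V} {N : Set (V × ℕ)} {n : ℕ} {𝒯 : ToomCycle V n}
  (hp : IsPresent A2 N 𝒯)
include hp

theorem typed_of_edgeUp {v : ℕ} (hv : v < n) (hup : edgeUp v ∈ 𝒯.E) :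
    (v ∈ (Vcirc n 𝒯.E).erase 0 ∧ Typed2 A2 N (𝒯.ψ v) (𝒯.ψ (v + 1))) ∨
      (v ∉ (Vcirc n 𝒯.E).erase 0 ∧ Typed1 N (𝒯.ψ v) (𝒯.ψ (v + 1))) := by
  have hE1 : edgeUp v ∈ E1 𝒯.E := mem_filter.mpr ⟨hup, rfl⟩
  have hmod : (edgeUp v).1 % n = v := Nat.mod_eq_of_lt hv
  by_cases hc : v ∈ (Vcirc n 𝒯.E).erase 0
  · exact Or.inl ⟨hc, hp.2.2.2.2.1 _ hE1 (by rw [hmod]; exact (mem_erase.mp hc).symm)⟩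
  · refine Or.inr ⟨hc, hp.2.2.1 _ hE1 ?_⟩
    rw [hmod]
    simp only [mem_erase, 𝒯.isOriented.mem_Vcirc, mem_Vone] at hc ⊢
    tauto

theorem typed_of_edgeDown {v : ℕ} (hv : v < n) (hdown : edgeDown v ∈ 𝒯.E) :
    ((v + 1) % n ∈ insert 0 (Vtwo n 𝒯.E) ∧ Typed2 A2 N (𝒯.ψ (v + 1)) (𝒯.ψ v)) ∨
      ((v + 1) % n ∉ insert 0 (Vtwo n 𝒯.E) ∧ Typed1 N (𝒯.ψ (v + 1)) (𝒯.ψ v)) := by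
  have hE2 : edgeDown v ∈ E2 𝒯.E := mem_filter.mpr ⟨hdown, rfl⟩
  by_cases hc : (v + 1) % n ∈ insert 0 (Vtwo n 𝒯.E)
  · exact Or.inl ⟨hc, hp.2.2.2.1 _ hE2 (by rwa [mem_insert, or_comm] at hc)⟩
  · refine Or.inr ⟨hc, hp.2.2.2.2.2 _ hE2 ?_⟩
    have ho := 𝒯.isOriented
    have hw : (v + 1) % n < n := Nat.mod_lt _ (by omega)
    have hup : edgeUp v ∉ 𝒯.E := (ho v hv).mp hdown
    show (v + 1) % n ∈ Vcirc n 𝒯.E ∧ (v + 1) % n ≠ 0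
    simp only [mem_insert, ho.mem_Vtwo, ho.mem_Vcirc, prev_succ_mod hv] at hc ⊢
    tauto

theorem time_step {v : ℕ} (hv : v < n) :
    ((𝒯.ψ (v + 1)).2 : ℤ) - (𝒯.ψ v).2 =
      (if v ∈ downs n 𝒯.E then 1 else 0) - (if v ∈ ups n 𝒯.E then 1 else 0) := by
  have ho := 𝒯.isOriented
  by_cases hup : edgeUp v ∈ 𝒯.E
  · have hdown : edgeDown v ∉ 𝒯.E := fun h => (ho v hv).mp h hup
    have hstep : ((𝒯.ψ (v + 1)).2 : ℤ) = (𝒯.ψ v).2 - 1 := by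
      rcases hp.typed_of_edgeUp hv hup with ⟨-, h⟩ | ⟨-, h⟩
      exacts [h.time, h.time]
    simp [ups, downs, hv, hup, hdown, hstep]
  · have hdown : edgeDown v ∈ 𝒯.E := (ho v hv).mpr hup
    have hstep : ((𝒯.ψ v).2 : ℤ) = (𝒯.ψ (v + 1)).2 - 1 := by
      rcases hp.typed_of_edgeDown hv hdown with ⟨-, h⟩ | ⟨-, h⟩
      exacts [h.time, h.time]
    simp [ups, downs, hv, hup, hdown, hstep]

theorem potential_step {d : V → ℤ} (hd : ∀ x, ∀ z ∈ A2 x, d z = d x + 1) {v : ℕ}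
    (hv : v < n) :
    d (𝒯.ψ (v + 1)).1 - d (𝒯.ψ v).1 =
      (if v ∈ (Vcirc n 𝒯.E).erase 0 then 1 else 0) -
        (if (v + 1) % n ∈ insert 0 (Vtwo n 𝒯.E) then 1 else 0) := by
  have ho := 𝒯.isOriented
  by_cases hup : edgeUp v ∈ 𝒯.E
  · -- `(v + 1) % n` is entered by an up edge, every position of `V_2 ∪ {0}` by a down edge
    have hnot : (v + 1) % n ∉ insert 0 (Vtwo n 𝒯.E) := by
      rw [mem_insert]
      rintro (h0 | h2)
      · have h0down := (ho.mem_Vcirc.mp 𝒯.zero_circ).2.1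
        rw [← h0, prev_succ_mod hv] at h0down
        exact h0down hup
      · exact (ho.mem_Vtwo.mp h2).2.1 (by rwa [prev_succ_mod hv])
    rcases hp.typed_of_edgeUp hv hup with ⟨hc, h2⟩ | ⟨hc, h1⟩
    · simp [hc, hnot, h2.potential hd]
    · simp [hc, hnot, h1.2.2]
  · have hnot : v ∉ (Vcirc n 𝒯.E).erase 0 := fun hc =>
      hup (ho.mem_Vcirc.mp (mem_of_mem_erase hc)).2.2
    rcases hp.typed_of_edgeDown hv ((ho v hv).mpr hup) with ⟨hc, h2⟩ | ⟨hc, h1⟩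
    · simp [hc, hnot, h2.potential hd]
    · simp [hc, hnot, h1.2.2]

theorem card_downs_eq_card_ups : #(downs n 𝒯.E) = #(ups n 𝒯.E) := by
  have htele := 𝒯.sum_range_sub_eq_zero fun p => (p.2 : ℤ)
  rw [sum_congr rfl fun v hv => hp.time_step (mem_range.mp hv), sum_sub_distrib,
    sum_range_boole_mem (s := downs n 𝒯.E) (filter_subset _ _),
    sum_range_boole_mem (s := ups n 𝒯.E) (filter_subset _ _)] at htele
  omega

theorem card_Vcirc_eq_card_Vtwo_add_two {d : V → ℤ}
    (hd : ∀ x, ∀ z ∈ A2 x, d z = d x + 1) :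
    #(Vcirc n 𝒯.E) = #(Vtwo n 𝒯.E) + 2 := by
  have ho := 𝒯.isOriented
  have h0 := 𝒯.zero_circ
  have h0two : 0 ∉ Vtwo n 𝒯.E := fun h => (ho.mem_Vtwo.mp h).2.2 (ho.mem_Vcirc.mp h0).2.2
  have hout : (Vcirc n 𝒯.E).erase 0 ⊆ range n := (erase_subset _ _).trans (filter_subset _ _)
  have hin : insert 0 (Vtwo n 𝒯.E) ⊆ range n :=
    insert_subset (mem_range.mpr (by have := hp.1; omega)) (filter_subset _ _)
  have hshift :
      ∑ v ∈ range n, (if (v + 1) % n ∈ insert 0 (Vtwo n 𝒯.E) then (1 : ℤ) else 0) =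
        #(insert 0 (Vtwo n 𝒯.E)) :=
    (sum_range_succ_mod n fun w => if w ∈ insert 0 (Vtwo n 𝒯.E) then (1 : ℤ) else 0).trans
      (sum_range_boole_mem hin)
  have htele := 𝒯.sum_range_sub_eq_zero fun p => d p.1
  rw [sum_congr rfl fun v hv => hp.potential_step hd (mem_range.mp hv), sum_sub_distrib,
    sum_range_boole_mem hout, hshift, card_erase_of_mem h0, card_insert_of_notMem h0two]
    at htele
  have := card_pos.mpr ⟨0, h0⟩
  omega

end IsPresent

end Toom

open Toom in
theorem toom_cycle_edge_count_general
    {V : Type*}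
    (G : SimpleGraph V) (r : V)
    (A2 : V → Finset V)
    (hA2dist : ∀ x, ∀ z ∈ A2 x, G.dist r z = G.dist r x + 1)
    (N : Set (V × ℕ))
    (n : ℕ) (𝒯 : ToomCycle V n)
    (hpres : IsPresent A2 N 𝒯) :
    (Vcirc n 𝒯.E).card = (Vstar n 𝒯.E).card ∧
    (E1 𝒯.E).card = (E2 𝒯.E).card ∧
    (𝒯.E.card : ℤ) = 4 * ((Vstar n 𝒯.E).card - 1) := by
  have ho := 𝒯.isOriented
  have hsources := ho.card_Vcirc_eq_card_Vstar
  have hdowns := ho.card_Vtwo_add_card_Vstar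
  have htime := hpres.card_downs_eq_card_ups
  have hdist := hpres.card_Vcirc_eq_card_Vtwo_add_two (d := fun x => (G.dist r x : ℤ))
    fun x z hz => by simp [hA2dist x z hz]
  have hE1 := card_E1_eq_card_ups 𝒯.edge_form
  have hE2 := card_E2_eq_card_downs 𝒯.edge_form
  have hE := card_E1_add_card_E2 𝒯.edge_form
  exact ⟨hsources, by omega, by omega⟩

open Toom in
/-- Lemma 4.12: for a present Toom cycle for Bootstrap Percolation with charges
`A_1^x = {x}` and `A_2^x ⊆ S_{k+1}(r) ∩ N(x)`, `|A_2^x| = j` (for a witness root `r` of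
`j ≤ j̄`), one has `|V_∘| = |V_*|`, `|Ē_1| = |Ē_2|` and `|Ē| = 4 (|V_*| − 1)`. -/
theorem toom_cycle_edge_count
    {V : Type*} [Infinite V]
    (G : SimpleGraph V) [DecidableRel G.Adj] [∀ v, Fintype (G.neighborSet v)]
    (hconn : G.Connected) (Δ : ℕ) (hΔ : ∀ x, G.degree x ≤ Δ)
    (j : ℕ) (hj1 : 1 ≤ j) (r : V)
    (hr : ∀ x : V,
      j ≤ ((G.neighborFinset x).filter fun z => G.dist r z = G.dist r x + 1).card)
    (A2 : V → Finset V)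
    (hA2sub : ∀ x, A2 x ⊆ G.neighborFinset x)
    (hA2dist : ∀ x, ∀ z ∈ A2 x, G.dist r z = G.dist r x + 1)
    (hA2card : ∀ x, (A2 x).card = j)
    (N : Set (V × ℕ)) (hN : ∀ p ∈ N, 1 ≤ p.2)
    (n : ℕ) (𝒯 : ToomCycle V n) (o : V) (T : ℕ) (hroot : 𝒯.ψ 0 = (o, T))
    (hpres : IsPresent A2 N 𝒯) :
    (Vcirc n 𝒯.E).card = (Vstar n 𝒯.E).card ∧
    (E1 𝒯.E).card = (E2 𝒯.E).card ∧
    (𝒯.E.card : ℤ) = 4 * ((Vstar n 𝒯.E).card - 1) :=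
  toom_cycle_edge_count_general G r A2 hA2dist N n 𝒯 hpres
end
end
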